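/- Shuffle product identity: let Γ : [0,1] → ℝ^N be a continuously differentiable path, let I = (i₁, …, i_k) and J = (j₁, …, j_l) be multi-indices with entries in {1, …, N}, and let R = (r₁, …, r_{k+l}) = (i₁, …, i_k, j₁, …, j_l) be their concatenation. Then S^I(Γ) · S^J(Γ) = Σ_{σ ∈ Sh(k,l)} S^{(r_{σ(1)}, …, r_{σ(k+l)})}(Γ), where the sum runs over all (k,l)-shuffles σ. -/

import Mathlib

open MeasureTheory

noncomputable section

/-- The simplex `Δ^k = {(t₁, …, t_k) : 0 ≤ t₁ ≤ ⋯ ≤ t_k ≤ 1}` as a subset of `ℝ^k`. -/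
def simplexSet (k : ℕ) : Set (Fin k → ℝ) :=
  {t | (∀ i j : Fin k, i ≤ j → t i ≤ t j) ∧ ∀ i, 0 ≤ t i ∧ t i ≤ 1}

/-- The iterated integral (path signature term) of a path `Γ` with respect to a multi-index
`I = (i₁, …, i_k)`: the Lebesgue integral over `Δ^k` of `γ_{i₁}'(t₁) ⋯ γ_{i_k}'(t_k)`. -/
def sig {N : ℕ} (Γ : ℝ → EuclideanSpace ℝ (Fin N)) {k : ℕ} (I : Fin k → Fin N) : ℝ :=
  ∫ t in simplexSet k, ∏ m : Fin k, deriv (fun s => Γ s (I m)) (t m)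

/-- A `(k,l)`-shuffle: a permutation `σ` of `{1, …, k+l}` such that
`σ⁻¹(1) < σ⁻¹(2) < ⋯ < σ⁻¹(k)` and `σ⁻¹(k+1) < σ⁻¹(k+2) < ⋯ < σ⁻¹(k+l)`. -/
def IsShuffle (k l : ℕ) (σ : Equiv.Perm (Fin (k + l))) : Prop :=
  StrictMono (fun i : Fin k => σ.symm (Fin.castAdd l i)) ∧
  StrictMono (fun j : Fin l => σ.symm (Fin.natAdd k j))

/-!
Splitting `t ∈ ℝ^{k+l}` into its first `k` and last `l` coordinates identifies `Δ^k × Δ^l` with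
the points of `[0,1]^{k+l}` whose two blocks of coordinates are each nondecreasing. Away from the
null set where two coordinates coincide, such a point is sorted by exactly one permutation `σ`,
and `σ` is a `(k,l)`-shuffle. Hence `Δ^k × Δ^l` is, up to a null set, the disjoint union over
shuffles `σ` of the simplices `{t_{σ(1)} ≤ ⋯ ≤ t_{σ(k+l)}}`. Fubini turns `S^I · S^J` into the
integral over this union, and the coordinate permutation `t ↦ t ∘ σ` turns the integral over the
`σ`-piece into `S^{R ∘ σ}`. Integrability holds because the derivatives of a `C¹` path are
bounded on `[0,1]`.
-/

theorem mem_simplexSet {n : ℕ} {t : Fin n → ℝ} :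
    t ∈ simplexSet n ↔ Monotone t ∧ ∀ i, t i ∈ Set.Icc 0 1 :=
  Iff.rfl

theorem volume_setOf_apply_eq_apply {ι : Type*} [Fintype ι] {p q : ι} (hpq : p ≠ q) :
    volume {t : ι → ℝ | t p = t q} = 0 := by
  classical
  have hker : {t : ι → ℝ | t p = t q} =
      (LinearMap.ker ((LinearMap.proj p : (ι → ℝ) →ₗ[ℝ] ℝ) - LinearMap.proj q) : Set _) := by
    ext t
    simp [sub_eq_zero]
  rw [hker]
  refine Measure.addHaar_submodule _ _ fun htop => ?_
  have hsingle : Pi.single p (1 : ℝ) ∈ LinearMap.ker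
      ((LinearMap.proj p : (ι → ℝ) →ₗ[ℝ] ℝ) - LinearMap.proj q) := htop ▸ Submodule.mem_top
  simp [Pi.single_eq_of_ne' hpq] at hsingle

theorem ae_injective (ι : Type*) [Fintype ι] : ∀ᵐ t : ι → ℝ, Function.Injective t := by
  have hpair : ∀ p q : ι, ∀ᵐ t : ι → ℝ, t p = t q → p = q := by
    intro p q
    by_cases hpq : p = q
    · exact .of_forall fun _ _ => hpq
    · exact (measure_eq_zero_iff_ae_notMem.1 (volume_setOf_apply_eq_apply hpq)).mono
        fun t ht he => absurd he ht
  simpa only [Function.Injective, ae_all_iff] using hpair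

theorem ContDiffOn.integrableOn_deriv_Icc {E : Type*} [NormedAddCommGroup E] [NormedSpace ℝ E]
    [CompleteSpace E] {g : ℝ → E} {a b : ℝ} (hg : ContDiffOn ℝ 1 g (Set.Icc a b)) (hab : a < b) :
    IntegrableOn (deriv g) (Set.Icc a b) := by
  obtain ⟨C, hC⟩ := isCompact_Icc.exists_bound_of_continuousOn
    (hg.continuousOn_derivWithin (uniqueDiffOn_Icc hab) le_rfl)
  refine Measure.integrableOn_of_bounded (M := max C 0) measure_Icc_lt_top.ne
    (aestronglyMeasurable_deriv g _) ?_
  filter_upwards [ae_restrict_mem measurableSet_Icc] with s hs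
  -- `deriv g` is the junk value `0` wherever `g` is not differentiable, e.g. possibly at `a`, `b`
  by_cases hd : DifferentiableAt ℝ g s
  · rw [← hd.derivWithin (uniqueDiffOn_Icc hab s hs)]
    exact (hC s hs).trans (le_max_left _ _)
  · simp [deriv_zero_of_not_differentiableAt hd]

theorem integrableOn_univ_pi_prod {ι : Type*} [Fintype ι] {f : ι → ℝ → ℝ} {s : Set ℝ}
    (hf : ∀ p, IntegrableOn (f p) s) :
    IntegrableOn (fun t : ι → ℝ => ∏ p, f p (t p)) (Set.univ.pi fun _ => s) := by
  rw [IntegrableOn, volume_pi, Measure.restrict_pi_pi]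
  exact Integrable.fintype_prod hf

def MeasurableEquiv.piFinAddProd (α : Type*) [MeasurableSpace α] (k l : ℕ) :
    (Fin (k + l) → α) ≃ᵐ (Fin k → α) × (Fin l → α) :=
  (MeasurableEquiv.piCongrLeft (fun _ => α) finSumFinEquiv).symm.trans
    (MeasurableEquiv.sumPiEquivProdPi fun _ => α)

theorem MeasurableEquiv.piFinAddProd_apply {α : Type*} [MeasurableSpace α] {k l : ℕ}
    (t : Fin (k + l) → α) :
    MeasurableEquiv.piFinAddProd α k l t =
      (fun i => t (Fin.castAdd l i), fun j => t (Fin.natAdd k j)) :=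
  rfl

theorem volume_measurePreserving_piFinAddProd (α : Type*) [MeasureSpace α]
    [SigmaFinite (volume : Measure α)] (k l : ℕ) :
    MeasurePreserving (MeasurableEquiv.piFinAddProd α k l) volume volume :=
  (volume_measurePreserving_sumPiEquivProdPi _).comp
    ((volume_measurePreserving_piCongrLeft _ finSumFinEquiv).symm _)

theorem setIntegral_prod_mul_setIntegral_prod {k l : ℕ} (f : Fin (k + l) → ℝ → ℝ)
    (S : Set (Fin k → ℝ)) (T : Set (Fin l → ℝ)) :
    (∫ x in S, ∏ i, f (Fin.castAdd l i) (x i)) * (∫ y in T, ∏ j, f (Fin.natAdd k j) (y j)) =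
      ∫ t in MeasurableEquiv.piFinAddProd ℝ k l ⁻¹' S ×ˢ T, ∏ p, f p (t p) := by
  rw [← setIntegral_prod_mul, ← Measure.volume_eq_prod,
    ← (volume_measurePreserving_piFinAddProd ℝ k l).setIntegral_preimage_emb
      (MeasurableEquiv.measurableEmbedding _)]
  simp only [MeasurableEquiv.piFinAddProd_apply, Fin.prod_univ_add]

theorem setIntegral_prod_comp_perm {ι : Type*} [Fintype ι]
    (f : ι → ℝ → ℝ) (σ : Equiv.Perm ι) (S : Set (ι → ℝ)) :
    ∫ t in S, ∏ m, f (σ m) (t m) = ∫ u in (· ∘ σ) ⁻¹' S, ∏ p, f p (u p) := by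
  have he : ∀ t p, MeasurableEquiv.piCongrLeft (fun _ => ℝ) σ t p = t (σ.symm p) := fun t p => by
    simp [MeasurableEquiv.piCongrLeft, Equiv.piCongrLeft_apply]
  have hpre : MeasurableEquiv.piCongrLeft (fun _ => ℝ) σ ⁻¹' ((· ∘ σ) ⁻¹' S) = S := by
    ext t
    simp [Function.comp_def, he]
  rw [← (volume_measurePreserving_piCongrLeft _ σ).setIntegral_preimage_emb
    (MeasurableEquiv.measurableEmbedding _) (fun u => ∏ p, f p (u p)), hpre]
  congr! 2 with t
  simpa [he] using Equiv.prod_comp σ fun p => f p (t (σ.symm p))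

section Shuffle

variable {α : Type*} {k l : ℕ}

theorem IsShuffle.monotone_comp [Preorder α] {σ : Equiv.Perm (Fin (k + l))}
    (hσ : IsShuffle k l σ) {t : Fin (k + l) → α} (ht : Monotone (t ∘ σ)) :
    Monotone (t ∘ Fin.castAdd l) ∧ Monotone (t ∘ Fin.natAdd k) :=
  ⟨by simpa [Function.comp_def] using ht.comp hσ.1.monotone,
    by simpa [Function.comp_def] using ht.comp hσ.2.monotone⟩

theorem StrictMono.perm_symm_comp [Preorder α] {β γ : Type*} [LinearOrder β] [Preorder γ]
    {σ : Equiv.Perm β} {t : β → α} {e : γ → β} (hσ : StrictMono (t ∘ σ))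
    (he : StrictMono (t ∘ e)) : StrictMono (σ.symm ∘ e) :=
  fun _ _ hij => hσ.lt_iff_lt.1 (by simpa using he hij)

theorem isShuffle_sort [LinearOrder α] {t : Fin (k + l) → α} (ht : Function.Injective t)
    (h₁ : Monotone (t ∘ Fin.castAdd l)) (h₂ : Monotone (t ∘ Fin.natAdd k)) :
    IsShuffle k l (Tuple.sort t) := by
  have hsort : StrictMono (t ∘ Tuple.sort t) :=
    (Tuple.monotone_sort t).strictMono_of_injective (ht.comp (Tuple.sort t).injective)
  exact ⟨hsort.perm_symm_comp (h₁.strictMono_of_injective (ht.comp (Fin.castAdd_injective _ _))),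
    hsort.perm_symm_comp (h₂.strictMono_of_injective (ht.comp (Fin.natAdd_injective _ _)))⟩

theorem Equiv.Perm.eq_of_monotone_comp [LinearOrder α] {n : ℕ} {t : Fin n → α}
    (ht : Function.Injective t)
    {σ τ : Equiv.Perm (Fin n)} (hσ : Monotone (t ∘ σ)) (hτ : Monotone (t ∘ τ)) : σ = τ := by
  have hsort : ∀ π : Equiv.Perm (Fin n), Monotone (t ∘ π) → π = Tuple.sort t := fun π hπ =>
    Tuple.eq_sort_iff.2 ⟨hπ, fun _ _ hij he => absurd (π.injective (ht he)) hij.ne⟩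
  rw [hsort σ hσ, hsort τ hτ]

end Shuffle

def permSimplex {n : ℕ} (σ : Equiv.Perm (Fin n)) : Set (Fin n → ℝ) :=
  (· ∘ σ) ⁻¹' simplexSet n

theorem measurableSet_simplexSet (n : ℕ) : MeasurableSet (simplexSet n) := by
  simp only [simplexSet, Set.ofPred_and, Set.ofPred_forall]
  measurability

theorem measurableSet_permSimplex {n : ℕ} (σ : Equiv.Perm (Fin n)) :
    MeasurableSet (permSimplex σ) :=
  measurableSet_preimage (measurable_pi_lambda _ fun m => measurable_pi_apply (σ m))
    (measurableSet_simplexSet n)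

theorem permSimplex_subset_univ_pi_Icc {n : ℕ} (σ : Equiv.Perm (Fin n)) :
    permSimplex σ ⊆ Set.univ.pi fun _ => Set.Icc 0 1 :=
  fun t ht p _ => by simpa using ht.2 (σ.symm p)

theorem aedisjoint_permSimplex {n : ℕ} {σ τ : Equiv.Perm (Fin n)} (hστ : σ ≠ τ) :
    AEDisjoint volume (permSimplex σ) (permSimplex τ) := by
  refine measure_mono_null ?_ (ae_iff.1 (ae_injective (Fin n)))
  exact fun t ⟨hσ, hτ⟩ ht => hστ (Equiv.Perm.eq_of_monotone_comp ht hσ.1 hτ.1)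

theorem preimage_piFinAddProd_simplexSet_ae_eq (k l : ℕ) :
    MeasurableEquiv.piFinAddProd ℝ k l ⁻¹' simplexSet k ×ˢ simplexSet l =ᵐ[volume]
      ⋃ σ : {σ // IsShuffle k l σ}, permSimplex σ.1 := by
  refine Filter.eventuallyEq_set.2 ?_
  filter_upwards [ae_injective _] with t ht
  have hbounds : ∀ σ : Equiv.Perm (Fin (k + l)),
      (∀ m, (t ∘ σ) m ∈ Set.Icc (0 : ℝ) 1) ↔ ∀ p, t p ∈ Set.Icc 0 1 :=
    fun σ => σ.forall_congr_right (q := fun p => t p ∈ Set.Icc 0 1)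
  simp only [Set.mem_preimage, MeasurableEquiv.piFinAddProd_apply, Set.mem_prod, Set.mem_iUnion,
    permSimplex, mem_simplexSet, hbounds, Subtype.exists, exists_prop,
    Fin.forall_fin_add (P := fun p => t p ∈ Set.Icc 0 1)]
  constructor
  · rintro ⟨⟨h₁, b₁⟩, h₂, b₂⟩
    exact ⟨_, isShuffle_sort ht h₁ h₂, Tuple.monotone_sort t, b₁, b₂⟩
  · rintro ⟨σ, hσ, hmono, b₁, b₂⟩
    exact ⟨⟨(hσ.monotone_comp hmono).1, b₁⟩, (hσ.monotone_comp hmono).2, b₂⟩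

open scoped Classical in
theorem setIntegral_simplexSet_mul_setIntegral_simplexSet {k l : ℕ} (f : Fin (k + l) → ℝ → ℝ)
    (hf : ∀ p, IntegrableOn (f p) (Set.Icc 0 1)) :
    (∫ x in simplexSet k, ∏ i, f (Fin.castAdd l i) (x i)) *
        (∫ y in simplexSet l, ∏ j, f (Fin.natAdd k j) (y j)) =
      ∑ σ : {σ // IsShuffle k l σ}, ∫ t in simplexSet (k + l), ∏ m, f (σ.1 m) (t m) := by
  have hint : IntegrableOn (fun t : Fin (k + l) → ℝ => ∏ p, f p (t p))
      (⋃ σ : {σ // IsShuffle k l σ}, permSimplex σ.1) :=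
    (integrableOn_univ_pi_prod hf).mono_set
      (Set.iUnion_subset fun σ => permSimplex_subset_univ_pi_Icc σ.1)
  have hdisj : Pairwise (Function.onFun (AEDisjoint volume)
      fun σ : {σ // IsShuffle k l σ} => permSimplex σ.1) :=
    fun σ τ hστ => aedisjoint_permSimplex (Subtype.coe_injective.ne hστ)
  rw [setIntegral_prod_mul_setIntegral_prod,
    setIntegral_congr_set (preimage_piFinAddProd_simplexSet_ae_eq k l),
    integral_iUnion_ae (s := fun σ : {σ // IsShuffle k l σ} => permSimplex σ.1)
      (fun σ => (measurableSet_permSimplex σ.1).nullMeasurableSet) hdisj hint,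
    tsum_fintype]
  exact Fintype.sum_congr _ _ fun σ => (setIntegral_prod_comp_perm f σ.1 _).symm

open scoped Classical in
theorem sig_shuffle_product {N k l : ℕ} (Γ : ℝ → EuclideanSpace ℝ (Fin N))
    (hΓ : ContDiffOn ℝ 1 Γ (Set.Icc 0 1))
    (I : Fin k → Fin N) (J : Fin l → Fin N) :
    sig Γ I * sig Γ J =
      ∑ σ : Equiv.Perm (Fin (k + l)),
        if IsShuffle k l σ then sig Γ (fun m => Fin.append I J (σ m)) else 0 := by
  have hf : ∀ p, IntegrableOn (deriv fun s => Γ s (Fin.append I J p)) (Set.Icc 0 1) := fun p =>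
    ((contDiffOn_piLp _).1 hΓ _).integrableOn_deriv_Icc zero_lt_one
  have hshuffle := setIntegral_simplexSet_mul_setIntegral_simplexSet _ hf
  simp only [Fin.append_left, Fin.append_right] at hshuffle
  rw [sig, sig, hshuffle, ← Finset.sum_filter,
    Finset.sum_subtype _ (p := IsShuffle k l) (by simp)]
  rfl
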